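/- Let A be a deterministic parity automaton over Σ with n states such that L(A) is not DBW-recognizable. Then there exists a certificate (x, x₁, x₂) for non-DBW-recognizability of L(A) with |x| + |x₁| + |x₂| ≤ 4·n; in particular, the length of a shortest certificate is linear in the size of a DPW for the language. -/

import Mathlib

structure DetAuto (α : Type) where
  Q : Type
  [fin : Fintype Q]
  init : Q
  δ : Q → α → Q

attribute [instance] DetAuto.fin

/-- The run of a deterministic automaton on an infinite word. -/
def DetAuto.run {α : Type} (M : DetAuto α) (x : ℕ → α) : ℕ → M.Q
  | 0 => M.init
  | n + 1 => M.δ (M.run x n) (x n)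

/-- Parity acceptance: the maximal color occurring infinitely often in the run is odd. -/
def ParityAccept {α : Type} (M : DetAuto α) (c : M.Q → ℕ) (x : ℕ → α) : Prop :=
  ∃ m, Odd m ∧ (∃ᶠ n in Filter.atTop, c (M.run x n) = m) ∧
    ∀ m', (∃ᶠ n in Filter.atTop, c (M.run x n) = m') → m' ≤ m

/-- A language is ω-regular iff it is recognized by some deterministic parity automaton. -/
def OmegaRegular {α : Type} (L : Set (ℕ → α)) : Prop :=
  ∃ (M : DetAuto α) (c : M.Q → ℕ), ∀ x, x ∈ L ↔ ParityAccept M c x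

/-- A language is DBW-recognizable iff some deterministic Büchi automaton recognizes it. -/
def DBWRecognizable {α : Type} (L : Set (ℕ → α)) : Prop :=
  ∃ (M : DetAuto α) (acc : Set M.Q), ∀ x, x ∈ L ↔ ∃ᶠ n in Filter.atTop, M.run x n ∈ acc

/-- `u` is a prefix of the infinite word `w`. -/
def HasPrefixWord {α : Type} (w : ℕ → α) (u : List α) : Prop :=
  ∀ i : Fin u.length, w i.1 = u.get i

/-- The ω-language `x·(x₁+x₂)*·x₁^ω`. -/
def LangA {α : Type} (x x₁ x₂ : List α) : Set (ℕ → α) :=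
  { w | ∃ ws : List (List α), (∀ u ∈ ws, u = x₁ ∨ u = x₂) ∧
        ∀ n, HasPrefixWord w (x ++ ws.flatten ++ (List.replicate n x₁).flatten) }

/-- The ω-language `x·(x₁*·x₂)^ω`. -/
def LangB {α : Type} (x x₁ x₂ : List α) : Set (ℕ → α) :=
  { w | ∃ j : ℕ → ℕ, ∀ n, HasPrefixWord w
        (x ++ ((List.range n).map (fun i => (List.replicate (j i) x₁).flatten ++ x₂)).flatten) }


/-!
Call a reachable state `q` an obstruction if it lies on a cycle whose maximal colour `k` is odd
and on a cycle whose maximal colour `l > k` is even. Re-based at a state of colour `k` on the odd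
cycle, the access word `x`, the odd cycle `x₁` and the even cycle `x₂` form a certificate: a word
of `x·(x₁+x₂)*·x₁^ω` eventually sees exactly the colours of `x₁`, and a word of `x·(x₁*·x₂)^ω`
sees colour `l` infinitely often and nothing larger. Cutting out repeated states makes `x` shorter
than `n`, `x₁` (keeping its start) at most `n` long and `x₂` (split at a state of colour `l`)
shorter than `2n`.

Without obstructions, the Büchi automaton with the same transitions that accepts at the states
all of whose cycles have odd maximal colour recognizes the language: a state visited infinitely
often by a run lies on a cycle whose maximal colour is the largest colour the run sees infinitely
often.
-/

open Filter

lemma Filter.Eventually.exists_le_frequently_eq {ι : Type*} {f : Filter ι} [f.NeBot] {s : ι → ℕ}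
    {B : ℕ} (h : ∀ᶠ t in f, s t ≤ B) : ∃ l, (∀ᶠ t in f, s t ≤ l) ∧ ∃ᶠ t in f, s t = l := by
  induction B with
  | zero => exact ⟨0, h, (h.mono fun t ht => Nat.le_zero.1 ht).frequently⟩
  | succ B ih =>
    by_cases hB : ∃ᶠ t in f, s t = B + 1
    · exact ⟨B + 1, h, hB⟩
    · exact ih ((h.and (not_frequently.1 hB)).mono fun t ht => by omega)

lemma Filter.Frequently.exists_frequently_eq {ι β : Type*} [Finite β] {f : Filter ι} {r : ι → β}
    {P : β → Prop} (h : ∃ᶠ t in f, P (r t)) : ∃ b, P b ∧ ∃ᶠ t in f, r t = b := by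
  obtain ⟨b, hb⟩ := frequently_exists (p := fun b t => P b ∧ r t = b).1
    (h.mono fun t ht => ⟨r t, ht, rfl⟩)
  exact ⟨b, hb.exists.choose_spec.1, hb.mono fun _ h => h.2⟩

lemma HasPrefixWord.of_append {α : Type} {w : ℕ → α} {u v : List α}
    (h : HasPrefixWord w (u ++ v)) : HasPrefixWord w u := fun i => by
  simpa [List.getElem_append_left i.2] using h ⟨i, by simp; omega⟩

lemma hasPrefixWord_map_range {α : Type} (w : ℕ → α) (t : ℕ) :
    HasPrefixWord w ((List.range t).map w) := fun i => by simp

lemma List.length_le_length_flatten {α : Type*} {bs : List (List α)} (h : ∀ b ∈ bs, b ≠ []) :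
    bs.length ≤ bs.flatten.length := by
  induction bs with
  | nil => simp
  | cons b bs ih =>
    have hb := List.length_pos_iff.2 (h b List.mem_cons_self)
    have := ih fun b' hb' => h b' (List.mem_cons_of_mem _ hb')
    simp only [List.length_cons, List.flatten_cons, List.length_append]
    omega

namespace DetAuto

variable {α : Type} (M : DetAuto α)

def evalFrom (q : M.Q) (w : List α) : M.Q := w.foldl M.δ q

/-- `i` ranges over all of `ℕ`, so the final state `M.evalFrom q w` is included. -/
def visited (q : M.Q) (w : List α) : Set M.Q := {p | ∃ i, M.evalFrom q (w.take i) = p}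

variable {M}

@[simp] lemma evalFrom_nil (q : M.Q) : M.evalFrom q [] = q := rfl

@[simp] lemma evalFrom_cons (q : M.Q) (a : α) (w : List α) :
    M.evalFrom q (a :: w) = M.evalFrom (M.δ q a) w := rfl

@[simp] lemma evalFrom_append (q : M.Q) (u v : List α) :
    M.evalFrom q (u ++ v) = M.evalFrom (M.evalFrom q u) v := List.foldl_append

lemma evalFrom_take_mem_visited (q : M.Q) (w : List α) (i : ℕ) :
    M.evalFrom q (w.take i) ∈ M.visited q w := ⟨i, rfl⟩

lemma mem_visited_self (q : M.Q) (w : List α) : q ∈ M.visited q w := ⟨0, rfl⟩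

@[simp] lemma visited_nil (q : M.Q) : M.visited q [] = {q} := by
  ext p
  simp [visited, eq_comm]

lemma visited_cons (q : M.Q) (a : α) (w : List α) :
    M.visited q (a :: w) = insert q (M.visited (M.δ q a) w) := by
  ext p
  constructor
  · rintro ⟨_ | i, rfl⟩
    · exact Set.mem_insert _ _
    · exact Set.mem_insert_of_mem _ ⟨i, rfl⟩
  · rintro (rfl | ⟨i, rfl⟩)
    · exact ⟨0, rfl⟩
    · exact ⟨i + 1, rfl⟩

lemma visited_append (q : M.Q) (u v : List α) :
    M.visited q (u ++ v) = M.visited q u ∪ M.visited (M.evalFrom q u) v := by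
  ext p
  constructor
  · rintro ⟨i, rfl⟩
    rcases le_or_gt i u.length with h | h
    · exact Or.inl ⟨i, by rw [List.take_append_of_le_length h]⟩
    · refine Or.inr ⟨i - u.length, ?_⟩
      rw [List.take_append, List.take_of_length_le h.le, evalFrom_append]
  · rintro (⟨i, rfl⟩ | ⟨j, rfl⟩)
    · rcases le_or_gt i u.length with h | h
      · exact ⟨i, by rw [List.take_append_of_le_length h]⟩
      · exact ⟨u.length, by rw [List.take_append_of_le_length le_rfl, List.take_of_length_le h.le,
          List.take_length]⟩
    · exact ⟨u.length + j, by rw [List.take_length_add_append, evalFrom_append]⟩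

lemma visited_rotate {q : M.Q} {u v : List α} (h : M.evalFrom q (u ++ v) = q) :
    M.visited (M.evalFrom q u) (v ++ u) = M.visited q (u ++ v) := by
  rw [evalFrom_append] at h
  rw [visited_append, visited_append, h, Set.union_comm]

lemma evalFrom_flatten {q : M.Q} {bs : List (List α)} (h : ∀ b ∈ bs, M.evalFrom q b = q) :
    M.evalFrom q bs.flatten = q := by
  induction bs with
  | nil => rfl
  | cons b bs ih =>
    rw [List.flatten_cons, evalFrom_append, h b List.mem_cons_self,
      ih fun b' hb' => h b' (List.mem_cons_of_mem _ hb')]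

lemma visited_flatten_subset {q : M.Q} {S : Set M.Q} (hq : q ∈ S) {bs : List (List α)}
    (h : ∀ b ∈ bs, M.evalFrom q b = q ∧ M.visited q b ⊆ S) :
    M.visited q bs.flatten ⊆ S := by
  induction bs with
  | nil => simpa using hq
  | cons b bs ih =>
    obtain ⟨hb, hbS⟩ := h b List.mem_cons_self
    rw [List.flatten_cons, visited_append, hb]
    exact Set.union_subset hbS (ih fun b' hb' => h b' (List.mem_cons_of_mem _ hb'))

lemma evalFrom_flatten_replicate {q : M.Q} {u : List α} (hu : M.evalFrom q u = q) (N : ℕ) :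
    M.evalFrom q (List.replicate N u).flatten = q :=
  evalFrom_flatten fun _ hb => List.eq_of_mem_replicate hb ▸ hu

lemma visited_flatten_replicate_subset {q : M.Q} {S : Set M.Q} {u : List α}
    (hu : M.evalFrom q u = q) (huS : M.visited q u ⊆ S) (N : ℕ) :
    M.visited q (List.replicate N u).flatten ⊆ S :=
  visited_flatten_subset (huS (mem_visited_self q u))
    fun _ hb => List.eq_of_mem_replicate hb ▸ ⟨hu, huS⟩

lemma exists_lt_evalFrom_take_eq (q : M.Q) {w : List α} (hw : Fintype.card M.Q ≤ w.length) :
    ∃ a b, a < b ∧ b ≤ w.length ∧ M.evalFrom q (w.take a) = M.evalFrom q (w.take b) := by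
  obtain ⟨a, b, hab, heq⟩ := Fintype.exists_ne_map_eq_of_card_lt
    (fun i : Fin (w.length + 1) => M.evalFrom q (w.take i)) (by simpa using Nat.lt_succ_of_le hw)
  rcases Fin.lt_or_lt_of_ne hab with h | h
  · exact ⟨a, b, h, Nat.lt_succ_iff.1 b.2, heq⟩
  · exact ⟨b, a, h, Nat.lt_succ_iff.1 a.2, heq.symm⟩

lemma exists_short_path (q : M.Q) (w : List α) :
    ∃ w', M.evalFrom q w' = M.evalFrom q w ∧ w'.length < Fintype.card M.Q ∧
      M.visited q w' ⊆ M.visited q w := by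
  induction hn : w.length using Nat.strong_induction_on generalizing w with
  | _ n ih =>
    rcases lt_or_ge n (Fintype.card M.Q) with hlt | hle
    · exact ⟨w, rfl, hn ▸ hlt, subset_rfl⟩
    obtain ⟨a, b, hab, hb, heq⟩ := exists_lt_evalFrom_take_eq q (hn ▸ hle)
    have hsplit : ∀ i, M.visited q w =
        M.visited q (w.take i) ∪ M.visited (M.evalFrom q (w.take i)) (w.drop i) := fun i => by
      rw [← visited_append, List.take_append_drop]
    obtain ⟨w', hw'eval, hw'len, hw'sub⟩ :=
      ih _ (by simp only [List.length_append, List.length_take, List.length_drop]; omega)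
        (w.take a ++ w.drop b) rfl
    refine ⟨w', ?_, hw'len, hw'sub.trans ?_⟩
    · rw [hw'eval, evalFrom_append, heq, ← evalFrom_append, List.take_append_drop]
    · rw [visited_append, heq]
      exact Set.union_subset ((hsplit a).symm ▸ Set.subset_union_left)
        ((hsplit b).symm ▸ Set.subset_union_right)

lemma exists_short_cycle {q : M.Q} {u : List α} (hu : u ≠ []) (hcyc : M.evalFrom q u = q) :
    ∃ u', u' ≠ [] ∧ M.evalFrom q u' = q ∧ u'.length ≤ Fintype.card M.Q ∧
      M.visited q u' ⊆ M.visited q u := by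
  obtain ⟨a, w, rfl⟩ := List.exists_cons_of_ne_nil hu
  obtain ⟨w', hw'eval, hw'len, hw'sub⟩ := exists_short_path (M.δ q a) w
  refine ⟨a :: w', List.cons_ne_nil _ _, by rwa [evalFrom_cons, hw'eval], by simpa, ?_⟩
  rw [visited_cons, visited_cons]
  exact Set.insert_subset_insert hw'sub

structure IsMaxColorCycle (M : DetAuto α) (c : M.Q → ℕ) (q : M.Q) (w : List α) (k : ℕ) : Prop where
  ne_nil : w ≠ []
  evalFrom_eq : M.evalFrom q w = q
  le : ∀ p ∈ M.visited q w, c p ≤ k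
  exists_eq : ∃ p ∈ M.visited q w, c p = k

namespace IsMaxColorCycle

variable {c : M.Q → ℕ} {q : M.Q} {k l : ℕ}

lemma append {u v : List α} (hu : M.IsMaxColorCycle c q u k) (hv : M.IsMaxColorCycle c q v l)
    (hkl : k ≤ l) : M.IsMaxColorCycle c q (u ++ v) l where
  ne_nil := by simp [hv.ne_nil]
  evalFrom_eq := by rw [evalFrom_append, hu.evalFrom_eq, hv.evalFrom_eq]
  le p hp := by
    rw [visited_append, hu.evalFrom_eq] at hp
    exact hp.elim (fun hp => (hu.le p hp).trans hkl) (hv.le p)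
  exists_eq := by
    obtain ⟨p, hp, hcp⟩ := hv.exists_eq
    exact ⟨p, by rw [visited_append, hu.evalFrom_eq]; exact Or.inr hp, hcp⟩

lemma rotate {u v : List α} (h : M.IsMaxColorCycle c q (u ++ v) k) :
    M.IsMaxColorCycle c (M.evalFrom q u) (v ++ u) k where
  ne_nil := by simpa [and_comm] using h.ne_nil
  evalFrom_eq := by
    have h' := h.evalFrom_eq
    rw [evalFrom_append] at h'
    rw [evalFrom_append, h']
  le := visited_rotate h.evalFrom_eq ▸ h.le
  exists_eq := visited_rotate h.evalFrom_eq ▸ h.exists_eq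

lemma exists_length_le_of_start {u : List α} (h : M.IsMaxColorCycle c q u (c q)) :
    ∃ u', M.IsMaxColorCycle c q u' (c q) ∧ u'.length ≤ Fintype.card M.Q := by
  obtain ⟨u', hne, hcyc, hlen, hsub⟩ := exists_short_cycle h.ne_nil h.evalFrom_eq
  exact ⟨u', ⟨hne, hcyc, fun p hp => h.le p (hsub hp), ⟨q, mem_visited_self q u', rfl⟩⟩, hlen⟩

/-- Split the cycle at a state of colour `l` and shorten both halves. -/
lemma exists_length_lt {v : List α} (h : M.IsMaxColorCycle c q v l) :
    ∃ v', M.IsMaxColorCycle c q v' l ∧ v'.length < 2 * Fintype.card M.Q := by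
  obtain ⟨_, ⟨i, rfl⟩, hl⟩ := h.exists_eq
  set p := M.evalFrom q (v.take i)
  by_cases hpq : p = q
  · obtain ⟨v', hne, hcyc, hlen, hsub⟩ := exists_short_cycle h.ne_nil h.evalFrom_eq
    have : 0 < Fintype.card M.Q := Fintype.card_pos_iff.2 ⟨q⟩
    exact ⟨v', ⟨hne, hcyc, fun p' hp' => h.le p' (hsub hp'), ⟨q, mem_visited_self q v', hpq ▸ hl⟩⟩,
      by omega⟩
  have hsplit : M.visited q v = M.visited q (v.take i) ∪ M.visited p (v.drop i) := by
    rw [← visited_append, List.take_append_drop]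
  have hback : M.evalFrom p (v.drop i) = q := by
    rw [← evalFrom_append, List.take_append_drop, h.evalFrom_eq]
  obtain ⟨v₁, hv₁eval, hv₁len, hv₁sub⟩ := exists_short_path q (v.take i)
  obtain ⟨v₂, hv₂eval, hv₂len, hv₂sub⟩ := exists_short_path p (v.drop i)
  rw [hback] at hv₂eval
  have hvisited : M.visited q (v₁ ++ v₂) = M.visited q v₁ ∪ M.visited p v₂ := by
    rw [visited_append, hv₁eval]
  refine ⟨v₁ ++ v₂, ⟨?_, ?_, fun p' hp' => h.le p' ?_, ⟨p, ?_, hl⟩⟩, by simp; omega⟩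
  · rintro h₀
    rw [(List.append_eq_nil_iff.1 h₀).2, evalFrom_nil] at hv₂eval
    exact hpq hv₂eval
  · rw [evalFrom_append, hv₁eval, hv₂eval]
  · rw [hvisited] at hp'
    rw [hsplit]
    exact Set.union_subset_union hv₁sub hv₂sub hp'
  · exact hvisited ▸ Or.inr (mem_visited_self p v₂)

end IsMaxColorCycle

lemma run_eq_evalFrom_take {w : ℕ → α} {P : List α} (h : HasPrefixWord w P) {t : ℕ}
    (ht : t ≤ P.length) : M.run w t = M.evalFrom M.init (P.take t) := by
  induction t with
  | zero => rfl
  | succ t ih =>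
    rw [run, ih (by omega), h ⟨t, ht⟩, List.take_add_one, List.getElem?_eq_getElem ht,
      Option.toList_some, evalFrom_append]
    rfl

lemma run_length {w : ℕ → α} {P : List α} (h : HasPrefixWord w P) :
    M.run w P.length = M.evalFrom M.init P := by
  rw [run_eq_evalFrom_take h le_rfl, List.take_length]

lemma run_eq_evalFrom (x : ℕ → α) (t : ℕ) :
    M.run x t = M.evalFrom M.init ((List.range t).map x) := by
  simpa using run_length (M := M) (hasPrefixWord_map_range x t)

lemma run_add (x : ℕ → α) (t i : ℕ) :
    M.run x (t + i) = M.evalFrom (M.run x t) ((List.range i).map fun j => x (t + j)) := by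
  induction i with
  | zero => rfl
  | succ i ih =>
    rw [← Nat.add_assoc, run, ih, List.range_succ, List.map_append, evalFrom_append]
    rfl

lemma visited_run_segment (x : ℕ → α) (t s : ℕ) :
    M.visited (M.run x t) ((List.range s).map fun j => x (t + j)) =
      {p | ∃ i ≤ s, M.run x (t + i) = p} := by
  ext p
  simp only [visited, ← List.map_take, List.take_range, ← run_add]
  constructor
  · rintro ⟨i, h⟩
    exact ⟨min i s, min_le_right _ _, h⟩
  · rintro ⟨i, hi, h⟩
    exact ⟨i, by rwa [min_eq_left hi]⟩

variable {c : M.Q → ℕ} {L : Set (ℕ → α)}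

lemma parityAccept_iff_odd {x : ℕ → α} {l : ℕ} (hle : ∀ᶠ t in atTop, c (M.run x t) ≤ l)
    (hl : ∃ᶠ t in atTop, c (M.run x t) = l) : ParityAccept M c x ↔ Odd l := by
  constructor
  · rintro ⟨m, hm, hfreq, hmax⟩
    obtain ⟨t, hmt, hlt⟩ := (hfreq.and_eventually hle).exists
    exact le_antisymm (hmt ▸ hlt) (hmax l hl) ▸ hm
  · refine fun hodd => ⟨l, hodd, hl, fun m hm => ?_⟩
    obtain ⟨t, hmt, hlt⟩ := (hm.and_eventually hle).exists
    exact hmt ▸ hlt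

lemma frequently_run_eq {w : ℕ → α} {p : M.Q}
    (h : ∀ N, ∃ P, N ≤ P.length ∧ HasPrefixWord w P ∧ M.evalFrom M.init P = p) :
    ∃ᶠ t in atTop, M.run w t = p :=
  frequently_atTop.2 fun N =>
    let ⟨P, hN, hP, hp⟩ := h N
    ⟨P.length, hN, (run_length hP).trans hp⟩

lemma eventually_run_mem {w : ℕ → α} {x : List α} {S : Set M.Q}
    (h : ∀ N, ∃ P, N ≤ P.length ∧ HasPrefixWord w (x ++ P) ∧
      M.visited (M.evalFrom M.init x) P ⊆ S) :
    ∀ᶠ t in atTop, M.run w t ∈ S := by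
  refine eventually_atTop.2 ⟨x.length, fun t ht => ?_⟩
  obtain ⟨P, hN, hP, hS⟩ := h t
  rw [run_eq_evalFrom_take hP (by simp; omega), List.take_append, List.take_of_length_le ht,
    evalFrom_append]
  exact hS (evalFrom_take_mem_visited _ _ _)

lemma exists_isMaxColorCycle_of_frequently {x : ℕ → α} {p : M.Q} {l : ℕ}
    (hle : ∀ᶠ t in atTop, c (M.run x t) ≤ l) (hl : ∃ᶠ t in atTop, c (M.run x t) = l)
    (hp : ∃ᶠ t in atTop, M.run x t = p) : ∃ w, M.IsMaxColorCycle c p w l := by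
  obtain ⟨T, hT⟩ := eventually_atTop.1 hle
  obtain ⟨t₀, ht₀, hp₀⟩ := frequently_atTop.1 hp T
  obtain ⟨t₁, ht₁, hl₁⟩ := frequently_atTop.1 hl t₀
  obtain ⟨t₂, ht₂, hp₂⟩ := frequently_atTop.1 hp (t₁ + 1)
  have hvisited := visited_run_segment (M := M) x t₀ (t₂ - t₀)
  subst hp₀
  refine ⟨(List.range (t₂ - t₀)).map fun j => x (t₀ + j), ⟨by simp; omega, ?_, ?_, ?_⟩⟩
  · rw [← run_add, Nat.add_sub_cancel' (by omega), hp₂]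
  · rw [hvisited]
    rintro _ ⟨i, -, rfl⟩
    exact hT _ (by omega)
  · rw [hvisited]
    exact ⟨_, ⟨t₁ - t₀, by omega, rfl⟩, by rwa [Nat.add_sub_cancel' ht₁]⟩

lemma langA_subset (hL : ∀ x, x ∈ L ↔ ParityAccept M c x) {x x₁ x₂ : List α} {q : M.Q} {k : ℕ}
    (hx : M.evalFrom M.init x = q) (h₁ : M.IsMaxColorCycle c q x₁ k) (hk : Odd k)
    (h₂ : M.evalFrom q x₂ = q) : LangA x x₁ x₂ ⊆ L := by
  rintro w ⟨ws, hws, hpre⟩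
  have hy : M.evalFrom M.init (x ++ ws.flatten) = q := by
    rw [evalFrom_append, hx,
      evalFrom_flatten fun b hb => (hws b hb).elim (· ▸ h₁.evalFrom_eq) (· ▸ h₂)]
  have hlen : ∀ N, N ≤ (List.replicate N x₁).flatten.length := fun N => by
    simpa using List.length_le_length_flatten (bs := List.replicate N x₁) (by simp [h₁.ne_nil])
  obtain ⟨_, ⟨i, rfl⟩, hki⟩ := h₁.exists_eq
  rw [hL, parityAccept_iff_odd (l := k) ?_ ?_]
  · exact hk
  · refine eventually_run_mem (S := {p | c p ≤ k}) fun N =>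
      ⟨_, hlen N, hpre N, ?_⟩
    rw [hy]
    exact visited_flatten_replicate_subset h₁.evalFrom_eq h₁.le N
  · refine (frequently_run_eq fun N =>
      ⟨x ++ ws.flatten ++ (List.replicate N x₁).flatten ++ x₁.take i, ?_, ?_, ?_⟩).mono
      fun t ht => ht ▸ hki
    · simp only [List.length_append]
      have := hlen N
      omega
    · have e : x ++ ws.flatten ++ (List.replicate (N + 1) x₁).flatten =
          x ++ ws.flatten ++ (List.replicate N x₁).flatten ++ x₁.take i ++ x₁.drop i := by
        simp [List.replicate_succ']
      exact (e ▸ hpre (N + 1)).of_append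
    · rw [evalFrom_append, evalFrom_append, hy, evalFrom_flatten_replicate h₁.evalFrom_eq]

lemma langB_inter_eq_empty (hL : ∀ x, x ∈ L ↔ ParityAccept M c x) {x x₁ x₂ : List α} {q : M.Q}
    {l : ℕ} (hx : M.evalFrom M.init x = q) (h₁ : M.evalFrom q x₁ = q)
    (h₁le : ∀ p ∈ M.visited q x₁, c p ≤ l) (h₂ : M.IsMaxColorCycle c q x₂ l) (hl : Even l) :
    LangB x x₁ x₂ ∩ L = ∅ := by
  refine Set.eq_empty_iff_forall_notMem.2 ?_
  rintro w ⟨⟨j, hpre⟩, hwL⟩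
  set B := fun i => (List.replicate (j i) x₁).flatten ++ x₂
  have hq : q ∈ {p | c p ≤ l} := h₂.le q (mem_visited_self q x₂)
  have hB : ∀ i, M.evalFrom q (B i) = q ∧ M.visited q (B i) ⊆ {p | c p ≤ l} := fun i => by
    refine ⟨by rw [evalFrom_append, evalFrom_flatten_replicate h₁, h₂.evalFrom_eq], ?_⟩
    rw [visited_append, evalFrom_flatten_replicate h₁]
    exact Set.union_subset (visited_flatten_replicate_subset h₁ h₁le _) h₂.le
  have hblocks : ∀ N, ∀ b ∈ (List.range N).map B,
      M.evalFrom q b = q ∧ M.visited q b ⊆ {p | c p ≤ l} := by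
    simp only [List.forall_mem_map]
    exact fun N i _ => hB i
  have hlen : ∀ N, N ≤ ((List.range N).map B).flatten.length := fun N => by
    simpa using List.length_le_length_flatten (bs := (List.range N).map B) (by simp [B, h₂.ne_nil])
  obtain ⟨_, ⟨i, rfl⟩, hli⟩ := h₂.exists_eq
  refine Nat.not_odd_iff_even.2 hl ((parityAccept_iff_odd ?_ ?_).1 ((hL w).1 hwL))
  · refine eventually_run_mem (S := {p | c p ≤ l}) fun N => ⟨_, hlen N, hpre N, ?_⟩
    rw [hx]
    exact visited_flatten_subset hq (hblocks N)
  · refine (frequently_run_eq fun N =>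
      ⟨x ++ ((List.range N).map B).flatten ++ (List.replicate (j N) x₁).flatten ++ x₂.take i,
        ?_, ?_, ?_⟩).mono fun t ht => ht ▸ hli
    · simp only [List.length_append]
      have := hlen N
      omega
    · have e : x ++ ((List.range (N + 1)).map B).flatten = x ++ ((List.range N).map B).flatten ++
          (List.replicate (j N) x₁).flatten ++ x₂.take i ++ x₂.drop i := by
        simp [B, List.range_succ]
      exact (e ▸ hpre (N + 1)).of_append
    · rw [evalFrom_append, evalFrom_append, evalFrom_append, hx,
        evalFrom_flatten fun b hb => (hblocks N b hb).1, evalFrom_flatten_replicate h₁]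

lemma exists_short_certificate_of_isMaxColorCycle (hL : ∀ x, x ∈ L ↔ ParityAccept M c x)
    {x u v : List α} {q : M.Q} {l : ℕ} (hx : M.evalFrom M.init x = q)
    (hu : M.IsMaxColorCycle c q u (c q)) (hodd : Odd (c q)) (hv : M.IsMaxColorCycle c q v l)
    (heven : Even l) (hle : c q ≤ l) :
    ∃ x x₁ x₂ : List α, x₁ ≠ [] ∧ x₂ ≠ [] ∧
      LangA x x₁ x₂ ⊆ L ∧ LangB x x₁ x₂ ∩ L = ∅ ∧
      x.length + x₁.length + x₂.length ≤ 4 * Fintype.card M.Q := by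
  obtain ⟨x', hx', hx'len, -⟩ := exists_short_path M.init x
  obtain ⟨u', hu', hu'len⟩ := hu.exists_length_le_of_start
  obtain ⟨v', hv', hv'len⟩ := hv.exists_length_lt
  exact ⟨x', u', v', hu'.ne_nil, hv'.ne_nil,
    langA_subset hL (hx'.trans hx) hu' hodd hv'.evalFrom_eq,
    langB_inter_eq_empty hL (hx'.trans hx) hu'.evalFrom_eq (fun p hp => (hu'.le p hp).trans hle)
      hv' heven,
    by omega⟩

def HasOddCycleBelowEvenCycle (M : DetAuto α) (c : M.Q → ℕ) (q : M.Q) : Prop :=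
  ∃ u v k l, M.IsMaxColorCycle c q u k ∧ M.IsMaxColorCycle c q v l ∧ Odd k ∧ Even l ∧ k < l

/-- Re-basing both cycles at a state of maximal colour on the odd cycle lets the shortened odd
cycle keep that colour. -/
lemma HasOddCycleBelowEvenCycle.exists_short_certificate (hL : ∀ x, x ∈ L ↔ ParityAccept M c x)
    {x : List α} (h : M.HasOddCycleBelowEvenCycle c (M.evalFrom M.init x)) :
    ∃ x x₁ x₂ : List α, x₁ ≠ [] ∧ x₂ ≠ [] ∧
      LangA x x₁ x₂ ⊆ L ∧ LangB x x₁ x₂ ∩ L = ∅ ∧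
      x.length + x₁.length + x₂.length ≤ 4 * Fintype.card M.Q := by
  obtain ⟨u, v, k, l, hu, hv, hk, hl, hkl⟩ := h
  obtain ⟨_, ⟨i, rfl⟩, hik⟩ := hu.exists_eq
  have hu' : M.IsMaxColorCycle c (M.evalFrom M.init x) (u.take i ++ u.drop i) k := by
    rwa [List.take_append_drop]
  have hv' : M.IsMaxColorCycle c (M.evalFrom M.init x) (u.take i ++ (u.drop i ++ v)) l := by
    rw [← List.append_assoc, List.take_append_drop]
    exact hu.append hv hkl.le
  subst hik
  exact exists_short_certificate_of_isMaxColorCycle hL (x := x ++ u.take i)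
    (evalFrom_append _ _ _) hu'.rotate hk hv'.rotate hl hkl.le

lemma dbwRecognizable_of_forall_not_hasOddCycleBelowEvenCycle
    (hL : ∀ x, x ∈ L ↔ ParityAccept M c x)
    (h : ∀ x, ¬ M.HasOddCycleBelowEvenCycle c (M.evalFrom M.init x)) : DBWRecognizable L := by
  refine ⟨M, {p | ∀ w k, M.IsMaxColorCycle c p w k → Odd k}, fun x => ?_⟩
  have hbound : ∀ᶠ t in atTop, c (M.run x t) ≤ Finset.univ.sup c :=
    .of_forall fun t => Finset.le_sup (Finset.mem_univ _)
  obtain ⟨l, hle, hl⟩ := hbound.exists_le_frequently_eq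
  rw [hL, parityAccept_iff_odd hle hl]
  constructor
  · intro hodd
    obtain ⟨q, rfl, hq⟩ := hl.exists_frequently_eq (r := M.run x) (P := (c · = l))
    suffices hacc : ∀ w k, M.IsMaxColorCycle c q w k → Odd k from hq.mono fun t ht => ht ▸ hacc
    intro w k hw
    obtain ⟨t, ht⟩ := hq.exists
    refine Nat.not_even_iff_odd.1 fun hk => h ((List.range t).map x) ?_
    rw [← run_eq_evalFrom, ht]
    obtain ⟨u, hu⟩ := exists_isMaxColorCycle_of_frequently hle hl hq
    have hlk : c q < k := (hw.le q (mem_visited_self q w)).lt_of_ne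
      fun hqk => Nat.not_even_iff_odd.2 hodd (hqk ▸ hk)
    exact ⟨u, w, _, k, hu, hw, hodd, hk, hlk⟩
  · intro hacc
    obtain ⟨p, hp, hfreq⟩ := hacc.exists_frequently_eq (r := M.run x)
    obtain ⟨u, hu⟩ := exists_isMaxColorCycle_of_frequently hle hl hfreq
    exact hp u l hu

end DetAuto

theorem stmt_8_general {Sig : Type} (M : DetAuto Sig) (c : M.Q → ℕ) (n : ℕ)
    (hn : Fintype.card M.Q = n) (L : Set (ℕ → Sig))
    (hL : ∀ x, x ∈ L ↔ ParityAccept M c x)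
    (hnd : ¬ DBWRecognizable L) :
    ∃ x x₁ x₂ : List Sig, x₁ ≠ [] ∧ x₂ ≠ [] ∧
      LangA x x₁ x₂ ⊆ L ∧ LangB x x₁ x₂ ∩ L = ∅ ∧
      x.length + x₁.length + x₂.length ≤ 4 * n := by
  obtain ⟨x, hx⟩ : ∃ x, M.HasOddCycleBelowEvenCycle c (M.evalFrom M.init x) := by
    by_contra! h
    exact hnd (DetAuto.dbwRecognizable_of_forall_not_hasOddCycleBelowEvenCycle hL h)
  subst hn
  exact hx.exists_short_certificate hL

/-- If a DPW with `n` states recognizes a language `L` that is not DBW-recognizable, then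
there is a certificate for the non-DBW-recognizability of `L` of length at most `4n`. -/
theorem stmt_8 {Sig : Type} [Fintype Sig] (M : DetAuto Sig) (c : M.Q → ℕ) (n : ℕ)
    (hn : Fintype.card M.Q = n) (L : Set (ℕ → Sig))
    (hL : ∀ x, x ∈ L ↔ ParityAccept M c x)
    (hnd : ¬ DBWRecognizable L) :
    ∃ x x₁ x₂ : List Sig, x₁ ≠ [] ∧ x₂ ≠ [] ∧
      LangA x x₁ x₂ ⊆ L ∧ LangB x x₁ x₂ ∩ L = ∅ ∧
      x.length + x₁.length + x₂.length ≤ 4 * n :=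
  stmt_8_general M c n hn L hL hnd
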